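/- arXiv:2604.21100 — 4 statements merged into one kernel-verified Lean document; each statement's English description precedes it below -/
import Mathlib

section
/- Let G_t = sum_{i=1}^t k_i k_i^T + λI with λ > 0 and C_t = sum_{i=1}^t v_i k_i^T. Define P_t = G_t^{-1}. Define the preconditioned DeltaNet recursion S_0 = 0 and S_t = S_{t-1} + (v_t - S_{t-1} k_t) k̃_t^T, where k̃_t = (P_{t-1} k_t) / (1 + k_t^T P_{t-1} k_t). Then S_t = C_t P_t for all t ≥ 0. -/
open Matrix

section helpers

variable {m n p : Type*} [Fintype m] [Fintype n] [Fintype p]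

private lemma vmv_smul_right (u : m → ℝ) (c : ℝ) (w : n → ℝ) :
    vecMulVec u (c • w) = c • vecMulVec u w := by
  ext i j; simp [vecMulVec_apply, mul_comm, mul_left_comm]

private lemma vmv_add_left (u₁ u₂ : m → ℝ) (w : n → ℝ) :
    vecMulVec (u₁ + u₂) w = vecMulVec u₁ w + vecMulVec u₂ w := by
  ext i j; simp [vecMulVec_apply, add_mul]

private lemma vmv_mul_mat (u : m → ℝ) (w : n → ℝ) (M : Matrix n p ℝ) :
    vecMulVec u w * M = vecMulVec u (w ᵥ* M) := by
  ext i j; simp [vecMulVec_apply, mul_apply, vecMul, dotProduct, Finset.mul_sum, mul_assoc]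

private lemma mul_vmv_mat (M : Matrix m n ℝ) (u : n → ℝ) (w : p → ℝ) :
    M * vecMulVec u w = vecMulVec (M *ᵥ u) w := by
  ext i j; simp [vecMulVec_apply, mul_apply, mulVec, dotProduct, Finset.sum_mul, mul_assoc]

private lemma vmv_mulVec (u : m → ℝ) (w : n → ℝ) (x : n → ℝ) :
    (vecMulVec u w) *ᵥ x = (w ⬝ᵥ x) • u := by
  ext i; simp [vecMulVec_apply, mulVec, dotProduct, Finset.mul_sum, mul_assoc, mul_comm,
    mul_left_comm]

private lemma vecMul_vmv (x : m → ℝ) (u : m → ℝ) (w : n → ℝ) :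
    x ᵥ* (vecMulVec u w) = (x ⬝ᵥ u) • w := by
  ext j
  simp only [vecMul, vecMulVec_apply, dotProduct, Pi.smul_apply, smul_eq_mul, Finset.sum_mul]
  exact Finset.sum_congr rfl fun i _ => by ring

private lemma vmv_transpose (u : m → ℝ) (w : n → ℝ) :
    (vecMulVec u w)ᵀ = vecMulVec w u := by
  ext i j; simp [vecMulVec_apply, mul_comm]

private lemma vmv_posSemidef [DecidableEq m] (u : m → ℝ) :
    (vecMulVec u u).PosSemidef := by
  refine Matrix.PosSemidef.of_dotProduct_mulVec_nonneg ?_ (fun x => ?_)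
  · show (vecMulVec u u)ᴴ = _
    ext i j; simp [vecMulVec_apply, mul_comm]
  · rw [vmv_mulVec, dotProduct_smul]
    simpa [dotProduct_comm] using mul_self_nonneg (u ⬝ᵥ x)

end helpers

/-- Preconditioned DeltaNet recursion recovers the exact ridge least-squares map
`S_t = C_t G_t⁻¹`. -/
theorem stmt_0 {dk dv : ℕ} (lam : ℝ) (hlam : 0 < lam)
    (k : ℕ → Fin dk → ℝ) (v : ℕ → Fin dv → ℝ)
    (G : ℕ → Matrix (Fin dk) (Fin dk) ℝ)
    (hG : ∀ t, G t = lam • (1 : Matrix (Fin dk) (Fin dk) ℝ) +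
      ∑ i ∈ Finset.range t, vecMulVec (k i) (k i))
    (C : ℕ → Matrix (Fin dv) (Fin dk) ℝ)
    (hC : ∀ t, C t = ∑ i ∈ Finset.range t, vecMulVec (v i) (k i))
    (S : ℕ → Matrix (Fin dv) (Fin dk) ℝ)
    (hS0 : S 0 = 0)
    (hS : ∀ t, S (t + 1) = S t +
      vecMulVec (v t - (S t).mulVec (k t))
        ((1 + k t ⬝ᵥ (G t)⁻¹.mulVec (k t))⁻¹ • (G t)⁻¹.mulVec (k t))) :
    ∀ t, S t = C t * (G t)⁻¹ := by
  -- G t is positive definite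
  have hGpd : ∀ t, (G t).PosDef := by
    intro t
    rw [hG t]
    refine Matrix.PosDef.add_posSemidef (Matrix.PosDef.of_dotProduct_mulVec_pos ?_ (fun x hx => ?_)) ?_
    · show (lam • (1 : Matrix (Fin dk) (Fin dk) ℝ))ᴴ = _
      ext i j
      by_cases h : i = j <;> simp [Matrix.one_apply, h, eq_comm]
    · simp only [smul_mulVec, one_mulVec, dotProduct_smul, star_trivial, smul_eq_mul]
      exact mul_pos hlam (by simpa using dotProduct_star_self_pos_iff.mpr hx)
    · exact Finset.sum_induction _ _ (fun a b ha hb => ha.add hb)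
        (Matrix.PosSemidef.zero) (fun i _ => vmv_posSemidef (k i))
  have hGsym : ∀ t, (G t)ᵀ = G t := by
    intro t
    have := (hGpd t).isHermitian
    simpa [Matrix.IsHermitian] using this
  have hGunit : ∀ t, IsUnit (G t).det := fun t => (hGpd t).det_pos.ne'.isUnit
  have hGP : ∀ t, G t * (G t)⁻¹ = 1 := fun t => Matrix.mul_nonsing_inv _ (hGunit t)
  -- key identity
  have key : ∀ t, S t * G t = C t := by
    intro t
    induction t with
    | zero => simp [hS0, hC]
    | succ t ih =>
      rw [hS t]
      set P := (G t)⁻¹ with hP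
      set kk := k t with hkk
      set r := v t - (S t) *ᵥ kk with hr
      set α : ℝ := 1 + kk ⬝ᵥ P *ᵥ kk with hα
      have hαpos : 0 < α := by
        have h1 : 0 ≤ kk ⬝ᵥ P *ᵥ kk := by
          have := ((hGpd t).inv.posSemidef).dotProduct_mulVec_nonneg kk
          simpa using this
        linarith
      have hGsucc : G (t + 1) = G t + vecMulVec kk kk := by
        rw [hG, hG, Finset.sum_range_succ, add_assoc]
      have hCsucc : C (t + 1) = C t + vecMulVec (v t) kk := by
        rw [hC, hC, Finset.sum_range_succ]
      have hPkG : (P *ᵥ kk) ᵥ* G t = kk := by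
        rw [← Matrix.mulVec_transpose, hGsym t, Matrix.mulVec_mulVec, hGP t, Matrix.one_mulVec]
      have hPkk : (P *ᵥ kk) ⬝ᵥ kk = kk ⬝ᵥ P *ᵥ kk := dotProduct_comm _ _
      rw [hGsucc, hCsucc]
      rw [Matrix.add_mul, Matrix.mul_add, Matrix.mul_add, ih]
      rw [mul_vmv_mat, vmv_smul_right, Matrix.smul_mul, Matrix.smul_mul,
        vmv_mul_mat, vmv_mul_mat, hPkG, vecMul_vmv, hPkk, vmv_smul_right, smul_smul]
      have hcoef : α⁻¹ • vecMulVec r kk + (α⁻¹ * (kk ⬝ᵥ P *ᵥ kk)) • vecMulVec r kk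
          = vecMulVec r kk := by
        rw [← add_smul]
        have : α⁻¹ + α⁻¹ * (kk ⬝ᵥ P *ᵥ kk) = α⁻¹ * α := by rw [hα]; ring
        rw [this, inv_mul_cancel₀ hαpos.ne', one_smul]
      have hsplit : vecMulVec (S t *ᵥ kk) kk + vecMulVec r kk = vecMulVec (v t) kk := by
        rw [← vmv_add_left]
        congr 1
        rw [hr]
        ext i; simp
      calc C t + vecMulVec (S t *ᵥ kk) kk +
            (α⁻¹ • vecMulVec r kk + (α⁻¹ * (kk ⬝ᵥ P *ᵥ kk)) • vecMulVec r kk)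
          = C t + (vecMulVec (S t *ᵥ kk) kk + vecMulVec r kk) := by rw [hcoef]; abel
        _ = C t + vecMulVec (v t) kk := by rw [hsplit]
  intro t
  calc S t = S t * (G t * (G t)⁻¹) := by rw [hGP t, Matrix.mul_one]
    _ = (S t * G t) * (G t)⁻¹ := by rw [Matrix.mul_assoc]
    _ = C t * (G t)⁻¹ := by rw [key t]
end

section
/- The diagonal approximate preconditioned linear attention and diagonal approximate preconditioned DeltaNet states can differ: in dimension 2, with λ = 1, v_1 = k_1 = (1,1)^T, the diagonal approximation Ĝ_1 = 2I gives the PLA state S_1^{APLA} = (1/2) 𝟙𝟙^T while the PDN state (with k̃_1 = (Ĝ_0^{-1} k_1)/(1 + k_1^T Ĝ_0^{-1} k_1) = (1/3)𝟙) is S_1^{APDN} = (1/3) 𝟙𝟙^T, so S_1^{APLA} ≠ S_1^{APDN}. -/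
open Matrix

namespace Matrix

variable {m n K : Type*} [Field K]

theorem inv_smul_one [Fintype n] [DecidableEq n] (c : K) :
    (c • (1 : Matrix n n K))⁻¹ = c⁻¹ • 1 := by
  rcases eq_or_ne c 0 with rfl | hc
  · simp
  · exact inv_eq_right_inv (by rw [smul_mul_smul_comm, mul_one, mul_inv_cancel₀ hc, one_smul])

theorem vecMulVec_mul_smul_one_inv [Fintype n] [DecidableEq n] (v : m → K) (k : n → K) (c : K) :
    vecMulVec v k * (c • (1 : Matrix n n K))⁻¹ = c⁻¹ • vecMulVec v k := by
  rw [inv_smul_one, Matrix.mul_smul, Matrix.mul_one]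

theorem vecMulVec_sub_zero_mulVec_smul_one_inv_mulVec [Fintype n] [DecidableEq n]
    (v k : n → K) :
    vecMulVec (v - (0 : Matrix n n K) *ᵥ k)
        ((1 + k ⬝ᵥ (1 : Matrix n n K)⁻¹ *ᵥ k)⁻¹ • (1 : Matrix n n K)⁻¹ *ᵥ k) =
      (1 + k ⬝ᵥ k)⁻¹ • vecMulVec v k := by
  rw [inv_one, one_mulVec, zero_mulVec, sub_zero, vecMulVec_smul]

theorem smul_vecMulVec_ne_smul_vecMulVec {a b : K} (hab : a ≠ b) {v w : n → K}
    (hv : v ≠ 0) (hw : w ≠ 0) : a • vecMulVec v w ≠ b • vecMulVec v w :=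
  (smul_left_injective K (vecMulVec_ne_zero hv hw)).ne hab

end Matrix

/-- Diagonal approximate PLA and PDN states can differ: a concrete 2-dimensional
counterexample with `λ = 1`, `v₁ = k₁ = (1,1)ᵀ`. -/
theorem stmt_4
    (one2 : Fin 2 → ℝ) (hone2 : one2 = ![1, 1])
    (G0hat G1hat : Matrix (Fin 2) (Fin 2) ℝ)
    (hG0 : G0hat = (1 : Matrix (Fin 2) (Fin 2) ℝ))
    (hG1 : G1hat = (2 : ℝ) • (1 : Matrix (Fin 2) (Fin 2) ℝ))
    (SAPLA : Matrix (Fin 2) (Fin 2) ℝ)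
    (hSAPLA : SAPLA = vecMulVec one2 one2 * G1hat⁻¹)
    (ktilde : Fin 2 → ℝ)
    (hktilde : ktilde = (1 + one2 ⬝ᵥ G0hat⁻¹.mulVec one2)⁻¹ • G0hat⁻¹.mulVec one2)
    (SAPDN : Matrix (Fin 2) (Fin 2) ℝ)
    (hSAPDN : SAPDN =
      vecMulVec (one2 - (0 : Matrix (Fin 2) (Fin 2) ℝ).mulVec one2) ktilde) :
    SAPLA = (2 : ℝ)⁻¹ • vecMulVec one2 one2 ∧
    SAPDN = (3 : ℝ)⁻¹ • vecMulVec one2 one2 ∧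
    SAPLA ≠ SAPDN := by
  subst hG0 hG1 hSAPLA hktilde hSAPDN
  have hdot : one2 ⬝ᵥ one2 = 2 := by
    simp only [hone2, dotProduct, Fin.sum_univ_two]
    norm_num
  have hPLA := vecMulVec_mul_smul_one_inv one2 one2 (2 : ℝ)
  have hPDN := vecMulVec_sub_zero_mulVec_smul_one_inv_mulVec one2 one2
  rw [hdot, show (1 + 2 : ℝ) = 3 by norm_num] at hPDN
  have hone2_ne : one2 ≠ 0 := fun h => by simpa [hone2] using congrFun h 0
  refine ⟨hPLA, hPDN, ?_⟩
  rw [hPLA, hPDN]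
  exact smul_vecMulVec_ne_smul_vecMulVec (by norm_num) hone2_ne hone2_ne
end

section
/- Sufficient condition for unit-disk eigenvalues in PGDN: let T = α(I - β k k̃^T) with α ∈ [0,1], β ∈ [0,1], ‖k‖₂ = 1, k̃ = B k where B = diag(b_1,...,b_d) with b_i ∈ [1/x, x] for some x > 1. If β x ≤ 2 then every eigenvalue λ of T satisfies |λ| ≤ 1. -/
/-!
A rank-one perturbation `α (I - β u wᵀ)` acts as `α` on the hyperplane `wᵀ v = 0` and has
`u` as an eigenvector for `α (1 - β wᵀ u)`, so these are its only eigenvalues. Here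
`wᵀ u = kᵀ B k` is a convex combination of the `b i`, hence lies in `[1/x, x]`, so
`0 ≤ β kᵀ B k ≤ β x ≤ 2` and `|1 - β kᵀ B k| ≤ 1`.
-/

open Matrix

theorem Matrix.eq_or_eq_of_hasEigenvalue_smul_one_sub_smul_vecMulVec {n K : Type*} [Fintype n]
    [DecidableEq n] [Field K] {α β μ : K} {u w : n → K}
    (hμ : Module.End.HasEigenvalue (toLin' (α • (1 - β • vecMulVec u w))) μ) :
    μ = α ∨ μ = α * (1 - β * (w ⬝ᵥ u)) := by
  obtain ⟨v, hv⟩ := hμ.exists_hasEigenvector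
  have hv0 : v ≠ 0 := hv.2
  have hMv : μ • v = α • (v - (β * (w ⬝ᵥ v)) • u) := by
    rw [← hv.apply_eq_smul, toLin'_apply, smul_mulVec, sub_mulVec, one_mulVec, smul_mulVec,
      vecMulVec_mulVec, op_smul_eq_smul, smul_smul]
  have hwv : (μ - α * (1 - β * (w ⬝ᵥ u))) * (w ⬝ᵥ v) = 0 := by
    have := congrArg (w ⬝ᵥ ·) hMv
    simp only [dotProduct_smul, dotProduct_sub, smul_eq_mul] at this
    linear_combination this
  rcases mul_eq_zero.mp hwv with h | h
  · exact .inr (sub_eq_zero.mp h)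
  · left
    rw [h, mul_zero, zero_smul, sub_zero] at hMv
    exact smul_left_injective K hv0 hMv

theorem Matrix.dotProduct_diagonal_mulVec_mem_Icc {n : Type*} [Fintype n] [DecidableEq n]
    {m M : ℝ} {b k : n → ℝ} (hb : ∀ i, b i ∈ Set.Icc m M) (hk : k ⬝ᵥ k = 1) :
    diagonal b *ᵥ k ⬝ᵥ k ∈ Set.Icc m M := by
  have hsum : diagonal b *ᵥ k ⬝ᵥ k = ∑ i, b i * (k i * k i) := by
    simp only [dotProduct, mulVec_diagonal, mul_assoc]
  have hk' : ∑ i, k i * k i = 1 := hk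
  rw [hsum]
  constructor
  · calc m = ∑ i, m * (k i * k i) := by rw [← Finset.mul_sum, hk', mul_one]
      _ ≤ _ := Finset.sum_le_sum fun i _ => mul_le_mul_of_nonneg_right (hb i).1 (mul_self_nonneg _)
  · calc ∑ i, b i * (k i * k i) ≤ ∑ i, M * (k i * k i) :=
          Finset.sum_le_sum fun i _ => mul_le_mul_of_nonneg_right (hb i).2 (mul_self_nonneg _)
      _ = M := by rw [← Finset.mul_sum, hk', mul_one]

theorem abs_mul_one_sub_le_one {α t : ℝ} (hα0 : 0 ≤ α) (hα1 : α ≤ 1) (ht0 : 0 ≤ t) (ht2 : t ≤ 2) :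
    |α * (1 - t)| ≤ 1 := by
  rw [abs_mul, abs_of_nonneg hα0]
  exact mul_le_one₀ hα1 (abs_nonneg _) (abs_le.mpr ⟨by linarith, by linarith⟩)

theorem stmt_7_general {d : ℕ} (α β x : ℝ)
    (hα0 : 0 ≤ α) (hα1 : α ≤ 1) (hβ0 : 0 ≤ β) (hx : 1 < x)
    (k : Fin d → ℝ) (hk : k ⬝ᵥ k = 1)
    (b : Fin d → ℝ) (hb : ∀ i, 1 / x ≤ b i ∧ b i ≤ x)
    (ktilde : Fin d → ℝ) (hktilde : ktilde = (Matrix.diagonal b).mulVec k)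
    (hβx : β * x ≤ 2) :
    ∀ μ : ℝ,
      Module.End.HasEigenvalue
        (Matrix.toLin'
          (α • ((1 : Matrix (Fin d) (Fin d) ℝ) - β • vecMulVec k ktilde))) μ →
      |μ| ≤ 1 := by
  intro μ hμ
  subst hktilde
  obtain ⟨hc_lb, hc_ub⟩ := dotProduct_diagonal_mulVec_mem_Icc hb hk
  have hc0 : 0 ≤ diagonal b *ᵥ k ⬝ᵥ k := (one_div_pos.mpr (zero_lt_one.trans hx)).le.trans hc_lb
  rcases eq_or_eq_of_hasEigenvalue_smul_one_sub_smul_vecMulVec hμ with rfl | rfl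
  · simpa using abs_mul_one_sub_le_one hα0 hα1 le_rfl zero_le_two
  · exact abs_mul_one_sub_le_one hα0 hα1 (mul_nonneg hβ0 hc0)
      ((mul_le_mul_of_nonneg_left hc_ub hβ0).trans hβx)

/-- Sufficient condition for unit-disk eigenvalues in the PGDN transition. -/
theorem stmt_7 {d : ℕ} (hd : 1 ≤ d) (α β x : ℝ)
    (hα0 : 0 ≤ α) (hα1 : α ≤ 1) (hβ0 : 0 ≤ β) (hβ1 : β ≤ 1) (hx : 1 < x)
    (k : Fin d → ℝ) (hk : k ⬝ᵥ k = 1)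
    (b : Fin d → ℝ) (hb : ∀ i, 1 / x ≤ b i ∧ b i ≤ x)
    (ktilde : Fin d → ℝ) (hktilde : ktilde = (Matrix.diagonal b).mulVec k)
    (hβx : β * x ≤ 2) :
    ∀ μ : ℝ,
      Module.End.HasEigenvalue
        (Matrix.toLin'
          (α • ((1 : Matrix (Fin d) (Fin d) ℝ) - β • vecMulVec k ktilde))) μ →
      |μ| ≤ 1 :=
  stmt_7_general α β x hα0 hα1 hβ0 hx k hk b hb ktilde hktilde hβx
end

section
/- Preconditioned Longhorn optimal update: with P symmetric positive definite, β ≥ 0, the solution of min_S tr((S - S_{prev}) P^{-1} (S - S_{prev})^T) + β‖S k - v‖₂² is S* = S_{prev} + (β / (1 + β k^T P k))(v - S_{prev} k)(k^T P), i.e. S* = (S_{prev} + β v k^T P)(I + β k k^T P)^{-1}. -/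
open Matrix
set_option maxHeartbeats 1000000

set_option linter.unusedSectionVars false
section helpers
variable {m n p : Type*} [Fintype m] [Fintype n] [Fintype p]

lemma mul_vecMulVec' (M : Matrix m n ℝ) (a : n → ℝ) (b : p → ℝ) :
    M * vecMulVec a b = vecMulVec (M.mulVec a) b := by
  ext i j
  simp [Matrix.mul_apply, vecMulVec_apply, mulVec, dotProduct, Finset.sum_mul, mul_assoc]

lemma vecMulVec_mul' (a : m → ℝ) (b : n → ℝ) (M : Matrix n p ℝ) :
    vecMulVec a b * M = vecMulVec a (vecMul b M) := by
  ext i j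
  simp [Matrix.mul_apply, vecMulVec_apply, vecMul, dotProduct, Finset.mul_sum, mul_assoc]

lemma vecMulVec_mulVec' (a : m → ℝ) (b : n → ℝ) (x : n → ℝ) :
    (vecMulVec a b).mulVec x = (b ⬝ᵥ x) • a := by
  ext i
  simp only [vecMulVec_apply, mulVec, dotProduct, Pi.smul_apply, smul_eq_mul, Finset.sum_mul]
  exact Finset.sum_congr rfl fun j _ => by ring

lemma smul_vecMulVec' (t : ℝ) (a : m → ℝ) (b : n → ℝ) :
    vecMulVec (t • a) b = t • vecMulVec a b := by
  ext i j; simp [vecMulVec_apply, mul_assoc]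

lemma vecMulVec_add_left' (a a' : m → ℝ) (b : n → ℝ) :
    vecMulVec (a + a') b = vecMulVec a b + vecMulVec a' b := by
  ext i j; simp [vecMulVec_apply, add_mul]

lemma transpose_vecMulVec' (a : m → ℝ) (b : n → ℝ) :
    (vecMulVec a b)ᵀ = vecMulVec b a := by
  ext i j; simp [vecMulVec_apply, mul_comm]

lemma trace_vecMulVec' (a : m → ℝ) (b : m → ℝ) :
    Matrix.trace (vecMulVec a b) = a ⬝ᵥ b := by
  simp [Matrix.trace, vecMulVec_apply, dotProduct, Matrix.diag]

lemma trace_mul_mul_transpose (D : Matrix m n ℝ) (A : Matrix n n ℝ) :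
    Matrix.trace (D * A * Dᵀ) = ∑ i, (D i) ⬝ᵥ A.mulVec (D i) := by
  simp only [Matrix.trace, Matrix.diag, Matrix.mul_apply, Matrix.transpose_apply,
    dotProduct, mulVec, Finset.sum_mul, Finset.mul_sum]
  refine Finset.sum_congr rfl fun i _ => ?_
  rw [Finset.sum_comm]
  exact Finset.sum_congr rfl fun j _ => Finset.sum_congr rfl fun l _ => by ring

end helpers

/-- Preconditioned Longhorn optimal update: the minimizer of
`tr((S-S_prev)P⁻¹(S-S_prev)ᵀ) + β‖Sk - v‖²` is
`S* = S_prev + (β/(1+β kᵀPk))(v - S_prev k)(kᵀP)`, which also equals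
`(S_prev + β v kᵀP)(I + β k kᵀP)⁻¹`. -/
theorem stmt_16 {dv dk : ℕ} (P : Matrix (Fin dk) (Fin dk) ℝ) (hP : P.PosDef)
    (Sprev : Matrix (Fin dv) (Fin dk) ℝ) (k : Fin dk → ℝ) (v : Fin dv → ℝ)
    (β : ℝ) (hβ : 0 ≤ β)
    (obj : Matrix (Fin dv) (Fin dk) ℝ → ℝ)
    (hobj : ∀ S, obj S =
      Matrix.trace ((S - Sprev) * P⁻¹ * (S - Sprev)ᵀ) +
        β * ∑ i, (S.mulVec k i - v i) ^ 2)
    (Sstar : Matrix (Fin dv) (Fin dk) ℝ)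
    (hSstar : Sstar = Sprev +
      (β / (1 + β * (k ⬝ᵥ P.mulVec k))) •
        vecMulVec (v - Sprev.mulVec k) (Matrix.vecMul k P)) :
    (∀ S, obj Sstar ≤ obj S) ∧
    Sstar = (Sprev + β • (vecMulVec v k * P)) *
      ((1 : Matrix (Fin dk) (Fin dk) ℝ) + β • (vecMulVec k k * P))⁻¹ := by
  have hsym : Pᵀ = P := by
    ext i j; simpa using congrFun (congrFun hP.1 i) j
  set a : ℝ := k ⬝ᵥ P.mulVec k with ha_def
  have ha0 : 0 ≤ a := by simpa using hP.posSemidef.dotProduct_mulVec_nonneg k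
  have hden : (0:ℝ) < 1 + β * a := by positivity
  have hden' : (1:ℝ) + β * a ≠ 0 := ne_of_gt hden
  set c : ℝ := β / (1 + β * a) with hc_def
  have hc : c * (1 + β * a) = β := div_mul_cancel₀ β hden'
  set u : Fin dv → ℝ := v - Sprev.mulVec k with hu_def
  set w : Fin dk → ℝ := Matrix.vecMul k P with hw_def
  have hw : w = P.mulVec k := by
    rw [hw_def]; conv_lhs => rw [← hsym]
    rw [vecMul_transpose]
  have hwk : w ⬝ᵥ k = a := by rw [hw, dotProduct_comm]
  set E : Matrix (Fin dv) (Fin dk) ℝ := c • vecMulVec u w with hE_def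
  have hE : Sstar = Sprev + E := hSstar
  have hSk : Sstar.mulVec k = Sprev.mulVec k + (c * a) • u := by
    rw [hE, add_mulVec, hE_def, smul_mulVec, vecMulVec_mulVec', hwk, smul_smul]
  have hr : Sstar.mulVec k - v = (c * a - 1) • u := by
    rw [hSk, hu_def]; ext i; simp; ring
  -- inverse of P applied to P k
  have hPdet : IsUnit P.det := hP.det_pos.ne'.isUnit
  have hPk : P⁻¹.mulVec (P.mulVec k) = k := by
    rw [mulVec_mulVec, Matrix.nonsing_inv_mul P hPdet, one_mulVec]
  have hAsym : (P⁻¹)ᵀ = P⁻¹ := by rw [Matrix.transpose_nonsing_inv, hsym]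
  -- key matrix identity: P⁻¹ * Eᵀ = c • vecMulVec k u
  have hAE : P⁻¹ * Eᵀ = c • vecMulVec k u := by
    rw [hE_def, Matrix.transpose_smul, transpose_vecMulVec', Matrix.mul_smul,
      mul_vecMulVec', hw, hPk]
  ---- Part 2
  set B : Matrix (Fin dk) (Fin dk) ℝ := vecMulVec k k * P with hB_def
  have hB : B = vecMulVec k w := by rw [hB_def, vecMulVec_mul', hw_def]
  have hBB : B * B = a • B := by
    rw [hB, mul_vecMulVec', vecMulVec_mulVec', hwk, smul_vecMulVec']
  have hco : β - c - β * (c * a) = 0 := by linear_combination -hc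
  have hright : ((1 : Matrix (Fin dk) (Fin dk) ℝ) + β • B) * (1 - c • B) = 1 := by
    have expand : ((1 : Matrix (Fin dk) (Fin dk) ℝ) + β • B) * (1 - c • B)
        = 1 + (β - c - β * (c * a)) • B := by
      rw [mul_sub, add_mul, add_mul, one_mul, mul_one, Matrix.smul_mul, one_mul,
        Matrix.mul_smul, hBB]
      match_scalars <;> ring
    rw [expand, hco, zero_smul, add_zero]
  have hMinv : ((1 : Matrix (Fin dk) (Fin dk) ℝ) + β • B)⁻¹ = 1 - c • B :=
    inv_eq_right_inv hright
  have hcross2 : Sstar * ((1 : Matrix (Fin dk) (Fin dk) ℝ) + β • B)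
      = Sprev + β • (vecMulVec v k * P) := by
    have h1 : Sstar * B = vecMulVec (Sprev.mulVec k) w + (c * a) • vecMulVec u w := by
      rw [hB, mul_vecMulVec', hSk, vecMulVec_add_left', smul_vecMulVec']
    have h2 : vecMulVec v k * P = vecMulVec u w + vecMulVec (Sprev.mulVec k) w := by
      rw [vecMulVec_mul', ← hw_def]
      have h3 : v = u + Sprev.mulVec k := by rw [hu_def]; ext i; simp
      rw [h3, vecMulVec_add_left']
    rw [Matrix.mul_add, Matrix.mul_one, Matrix.mul_smul, h1, h2, hE, hE_def]
    have hc' : c + β * (c * a) = β := by linarith [hco]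
    match_scalars <;> linarith [hco]
  have hpart2 : Sstar = (Sprev + β • (vecMulVec v k * P)) *
      ((1 : Matrix (Fin dk) (Fin dk) ℝ) + β • (vecMulVec k k * P))⁻¹ := by
    conv_rhs => rw [← hB_def, ← hcross2, Matrix.mul_assoc, hMinv, hright, Matrix.mul_one]
  refine ⟨fun S => ?_, hpart2⟩
  set D : Matrix (Fin dv) (Fin dk) ℝ := S - Sstar with hD_def
  have hSsub : S - Sprev = D + E := by rw [hD_def, hE]; abel
  have hmv : S.mulVec k - v = D.mulVec k + (c * a - 1) • u := by
    rw [hD_def, Matrix.sub_mulVec, ← hr]; abel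
  have hE2 : Sstar - Sprev = E := by rw [hE]; abel
  -- trace expansion
  have hEAD : Matrix.trace (E * P⁻¹ * Dᵀ) = Matrix.trace (D * P⁻¹ * Eᵀ) := by
    rw [← Matrix.trace_transpose (E * P⁻¹ * Dᵀ)]
    congr 1
    rw [Matrix.transpose_mul, Matrix.transpose_mul, Matrix.transpose_transpose, hAsym,
      Matrix.mul_assoc]
  have htr : Matrix.trace ((D + E) * P⁻¹ * (D + E)ᵀ)
      = Matrix.trace (D * P⁻¹ * Dᵀ) + 2 * Matrix.trace (D * P⁻¹ * Eᵀ)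
        + Matrix.trace (E * P⁻¹ * Eᵀ) := by
    rw [Matrix.transpose_add, Matrix.add_mul, Matrix.add_mul, Matrix.mul_add, Matrix.mul_add,
      Matrix.trace_add, Matrix.trace_add, Matrix.trace_add, hEAD]
    ring
  -- cross-term value
  have hDAE : Matrix.trace (D * P⁻¹ * Eᵀ) = c * (D.mulVec k ⬝ᵥ u) := by
    rw [Matrix.mul_assoc, hAE, Matrix.mul_smul, Matrix.trace_smul, mul_vecMulVec',
      trace_vecMulVec', smul_eq_mul]
  -- sum expansions
  have hsum : ∑ i, (S.mulVec k i - v i) ^ 2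
      = ∑ i, (D.mulVec k i) ^ 2 + 2 * (c * a - 1) * (D.mulVec k ⬝ᵥ u)
        + (c * a - 1) ^ 2 * ∑ i, (u i) ^ 2 := by
    have h1 : ∀ i, (S.mulVec k i - v i) ^ 2
        = (D.mulVec k i) ^ 2 + 2 * (c * a - 1) * (D.mulVec k i * u i)
          + (c * a - 1) ^ 2 * (u i) ^ 2 := by
      intro i
      have h := congrFun hmv i
      simp only [Pi.sub_apply, Pi.add_apply, Pi.smul_apply, smul_eq_mul] at h
      rw [h]; ring
    rw [Finset.sum_congr rfl (fun i _ => h1 i), Finset.sum_add_distrib,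
      Finset.sum_add_distrib, ← Finset.mul_sum, ← Finset.mul_sum]
    rfl
  have hsum2 : ∑ i, (Sstar.mulVec k i - v i) ^ 2 = (c * a - 1) ^ 2 * ∑ i, (u i) ^ 2 := by
    rw [Finset.mul_sum]
    refine Finset.sum_congr rfl fun i _ => ?_
    have h := congrFun hr i
    simp only [Pi.sub_apply, Pi.smul_apply, smul_eq_mul] at h
    rw [h]; ring
  -- nonnegativity
  have htrnn : 0 ≤ Matrix.trace (D * P⁻¹ * Dᵀ) := by
    rw [trace_mul_mul_transpose]
    refine Finset.sum_nonneg fun i _ => ?_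
    simpa using hP.inv.posSemidef.dotProduct_mulVec_nonneg (D i)
  have hsnn : 0 ≤ β * ∑ i, (D.mulVec k i) ^ 2 :=
    mul_nonneg hβ (Finset.sum_nonneg fun i _ => sq_nonneg _)
  -- cross term vanishes
  have hz : c + β * (c * a - 1) = 0 := by linarith [hco]
  have hcross0 : 2 * (c * (D.mulVec k ⬝ᵥ u)) + β * (2 * (c * a - 1) * (D.mulVec k ⬝ᵥ u)) = 0 := by
    linear_combination 2 * (D.mulVec k ⬝ᵥ u) * hz
  rw [hobj S, hobj Sstar, hSsub, htr, hsum, hE2, hsum2, hDAE]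
  linarith [htrnn, hsnn, hcross0]
end
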